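/- Let 1 ≤ p < ∞ and let a, b, c ∈ ℂ with {a^k b^l : k, l ∈ ℕ} dense in ℂ and |c| > 1. Let T_1, T_2 be the continuous linear operators on ℓ^p(ℕ) over ℂ defined coordinatewise by T_1(x_1, x_2, x_3, …) = (a x_1, c x_2, c x_3, …) and T_2(x_1, x_2, x_3, …) = (b x_1, c x_2, c x_3, …). Then: (i) {x ∈ ℓ^p(ℕ) : J_{(T_1,T_2)}(x) = ℓ^p(ℕ)} = {(x_1, 0, 0, …) : x_1 ∈ ℂ}; in particular the pair (T_1, T_2) is locally hypercyclic; and (ii) the pair (T_1, T_2) is not hypercyclic, i.e. no x ∈ ℓ^p(ℕ) has {T_1^k T_2^l x : k, l ∈ ℕ∪{0}} dense in ℓ^p(ℕ). -/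

import Mathlib

open Filter Topology ENNReal

/-- The extended limit set `J_{(T₁,T₂)}(x)` of a pair of continuous linear operators on a
complex normed space: the set of `y` such that there exist a sequence `xₘ → x` and
sequences of non-negative integers `kₘ, lₘ` with `kₘ + lₘ → ∞` and
`T₁^{kₘ} T₂^{lₘ} xₘ → y`. -/
def JSetPairOp {X : Type*} [NormedAddCommGroup X] [NormedSpace ℂ X]
    (T₁ T₂ : X →L[ℂ] X) (x : X) : Set X :=
  {y | ∃ (u : ℕ → X) (k l : ℕ → ℕ),
    Tendsto u atTop (𝓝 x) ∧
    Tendsto (fun m => k m + l m) atTop atTop ∧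
    Tendsto (fun m => (T₁ ^ k m * T₂ ^ l m) (u m)) atTop (𝓝 y)}

namespace LpPairAux

variable {p : ℝ≥0∞} [Fact (1 ≤ p)]

lemma pow_coord (T : lp (fun _ : ℕ => ℂ) p →L[ℂ] lp (fun _ : ℕ => ℂ) p) (d : ℕ → ℂ)
    (hT : ∀ (x : lp (fun _ : ℕ => ℂ) p) (i : ℕ),
      (T x : ∀ _ : ℕ, ℂ) i = d i * (x : ∀ _ : ℕ, ℂ) i)
    (k : ℕ) (x : lp (fun _ : ℕ => ℂ) p) (i : ℕ) :
    ((T ^ k) x : ∀ _ : ℕ, ℂ) i = d i ^ k * (x : ∀ _ : ℕ, ℂ) i := by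
  induction k generalizing x with
  | zero => simp
  | succ n ih =>
      rw [pow_succ, ContinuousLinearMap.mul_apply, ih (T x), hT, pow_succ]
      ring

lemma pair_coord (a b c : ℂ)
    (T₁ T₂ : lp (fun _ : ℕ => ℂ) p →L[ℂ] lp (fun _ : ℕ => ℂ) p)
    (hT₁ : ∀ (x : lp (fun _ : ℕ => ℂ) p) (i : ℕ),
      (T₁ x : ∀ _ : ℕ, ℂ) i = (if i = 0 then a else c) * (x : ∀ _ : ℕ, ℂ) i)
    (hT₂ : ∀ (x : lp (fun _ : ℕ => ℂ) p) (i : ℕ),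
      (T₂ x : ∀ _ : ℕ, ℂ) i = (if i = 0 then b else c) * (x : ∀ _ : ℕ, ℂ) i)
    (k l : ℕ) (x : lp (fun _ : ℕ => ℂ) p) (i : ℕ) :
    ((T₁ ^ k * T₂ ^ l) x : ∀ _ : ℕ, ℂ) i
      = (if i = 0 then a ^ k * b ^ l else c ^ (k + l)) * (x : ∀ _ : ℕ, ℂ) i := by
  rw [ContinuousLinearMap.mul_apply,
    pow_coord T₁ (fun i => if i = 0 then a else c) hT₁ k _ i,
    pow_coord T₂ (fun i => if i = 0 then b else c) hT₂ l x i]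
  by_cases h : i = 0 <;> simp [h, pow_add] <;> ring

lemma ne_zero_of_dense {a b : ℂ}
    (hab : Dense {w : ℂ | ∃ k l : ℕ, 0 < k ∧ 0 < l ∧ a ^ k * b ^ l = w}) :
    a ≠ 0 ∧ b ≠ 0 := by
  constructor
  · rintro rfl
    obtain ⟨w, ⟨k, l, hk, _, rfl⟩, hw⟩ := hab.exists_dist_lt 1 (ε := 1/2) (by norm_num)
    rw [zero_pow hk.ne', zero_mul] at hw
    simp [Complex.dist_eq] at hw
    norm_num at hw
  · rintro rfl
    obtain ⟨w, ⟨k, l, _, hl, rfl⟩, hw⟩ := hab.exists_dist_lt 1 (ε := 1/2) (by norm_num)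
    rw [zero_pow hl.ne', mul_zero] at hw
    simp [Complex.dist_eq] at hw
    norm_num at hw

lemma exists_pow_close {a b : ℂ}
    (hab : Dense {w : ℂ | ∃ k l : ℕ, 0 < k ∧ 0 < l ∧ a ^ k * b ^ l = w})
    (m : ℕ) (z : ℂ) {ε : ℝ} (hε : 0 < ε) :
    ∃ k l : ℕ, m < k ∧ m < l ∧ ‖a ^ k * b ^ l - z‖ < ε := by
  obtain ⟨ha, hb⟩ := ne_zero_of_dense hab
  set s : ℂ := a ^ (m+1) * b ^ (m+1) with hs_def
  have hs : s ≠ 0 := mul_ne_zero (pow_ne_zero _ ha) (pow_ne_zero _ hb)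
  have hsn : (0:ℝ) < ‖s‖ := norm_pos_iff.mpr hs
  obtain ⟨w, ⟨k, l, hk, hl, rfl⟩, hw⟩ := hab.exists_dist_lt (z / s) (ε := ε / ‖s‖)
    (div_pos hε hsn)
  refine ⟨m + 1 + k, m + 1 + l, by omega, by omega, ?_⟩
  have h1 : a ^ (m + 1 + k) * b ^ (m + 1 + l) = s * (a ^ k * b ^ l) := by
    rw [pow_add, pow_add, hs_def]; ring
  have h2 : s * (a ^ k * b ^ l) - z = s * (a ^ k * b ^ l - z / s) := by
    rw [mul_sub, mul_div_cancel₀ _ hs]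
  rw [h1, h2, norm_mul]
  have := hw
  rw [dist_comm, Complex.dist_eq] at this
  calc ‖s‖ * ‖a ^ k * b ^ l - z / s‖ < ‖s‖ * (ε / ‖s‖) := by
        exact mul_lt_mul_of_pos_left this hsn
    _ = ε := by rw [mul_comm, div_mul_cancel₀ _ hsn.ne']

lemma coord_tendsto (hp0 : p ≠ 0) {u : ℕ → lp (fun _ : ℕ => ℂ) p}
    {x : lp (fun _ : ℕ => ℂ) p} (h : Tendsto u atTop (𝓝 x)) (i : ℕ) :
    Tendsto (fun m => (u m : ∀ _ : ℕ, ℂ) i) atTop (𝓝 ((x : ∀ _ : ℕ, ℂ) i)) := by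
  rw [tendsto_iff_norm_sub_tendsto_zero] at h ⊢
  apply squeeze_zero (fun m => norm_nonneg _) (fun m => ?_) h
  have := lp.norm_apply_le_norm hp0 (u m - x) i
  rwa [lp.coeFn_sub, Pi.sub_apply] at this

set_option maxHeartbeats 1000000 in
set_option synthInstance.maxHeartbeats 200000 in
lemma mem_J (hp : p ≠ ⊤) (a b c : ℂ) (hc : 1 < ‖c‖)
    (T₁ T₂ : lp (fun _ : ℕ => ℂ) p →L[ℂ] lp (fun _ : ℕ => ℂ) p)
    (hT₁ : ∀ (x : lp (fun _ : ℕ => ℂ) p) (i : ℕ),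
      (T₁ x : ∀ _ : ℕ, ℂ) i = (if i = 0 then a else c) * (x : ∀ _ : ℕ, ℂ) i)
    (hT₂ : ∀ (x : lp (fun _ : ℕ => ℂ) p) (i : ℕ),
      (T₂ x : ∀ _ : ℕ, ℂ) i = (if i = 0 then b else c) * (x : ∀ _ : ℕ, ℂ) i)
    (x y : lp (fun _ : ℕ => ℂ) p)
    (hx : ∀ i : ℕ, i ≠ 0 → (x : ∀ _ : ℕ, ℂ) i = 0)
    (k l : ℕ → ℕ) (hk : ∀ m, m ≤ k m) (α : ℕ → ℂ)
    (hα : Tendsto α atTop (𝓝 ((x : ∀ _ : ℕ, ℂ) 0)))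
    (hwα : Tendsto (fun m => a ^ k m * b ^ l m * α m) atTop (𝓝 ((y : ∀ _ : ℕ, ℂ) 0))) :
    y ∈ JSetPairOp T₁ T₂ x := by
  have hcn : 1 < ‖c‖ := hc
  have hc0 : c ≠ 0 := by
    intro h; rw [h] at hcn; simp at hcn; linarith
  have hpt : 0 < p.toReal := by
    refine ENNReal.toReal_pos ?_ hp
    intro h
    have h1 : (1:ℝ≥0∞) ≤ p := Fact.out
    rw [h] at h1; simp at h1
  set K : ℕ → ℕ := fun m => k m + l m with hK_def
  -- the inverse powers of c tend to zero
  have hinv : Tendsto (fun m => ((c : ℂ) ^ K m)⁻¹) atTop (𝓝 0) := by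
    rw [tendsto_zero_iff_norm_tendsto_zero]
    have hb : ∀ m, ‖((c : ℂ) ^ K m)⁻¹‖ ≤ (‖c‖⁻¹) ^ m := by
      intro m
      rw [norm_inv, norm_pow, ← inv_pow]
      apply pow_le_pow_of_le_one (by positivity) (by
        rw [inv_le_one_iff₀]; right; exact hcn.le)
      exact le_trans (hk m) (Nat.le_add_right _ _)
    have hgeo : Tendsto (fun m : ℕ => (‖c‖⁻¹) ^ m) atTop (𝓝 0) :=
      tendsto_pow_atTop_nhds_zero_of_lt_one (by positivity)
        (by rw [inv_lt_one_iff₀]; right; exact hcn)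
    exact squeeze_zero (fun m => norm_nonneg _) hb hgeo
  set β : ℕ → ℂ := fun m =>
    α m - (x : ∀ _ : ℕ, ℂ) 0 - ((c : ℂ) ^ K m)⁻¹ * (y : ∀ _ : ℕ, ℂ) 0 with hβ_def
  have hβ : Tendsto β atTop (𝓝 0) := by
    have h1 : Tendsto (fun m => α m - (x : ∀ _ : ℕ, ℂ) 0) atTop (𝓝 0) := by
      simpa using hα.sub_const ((x : ∀ _ : ℕ, ℂ) 0)
    have h2 : Tendsto (fun m => ((c : ℂ) ^ K m)⁻¹ * (y : ∀ _ : ℕ, ℂ) 0) atTop (𝓝 0) := by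
      simpa using hinv.mul_const ((y : ∀ _ : ℕ, ℂ) 0)
    simpa using h1.sub h2
  set u : ℕ → lp (fun _ : ℕ => ℂ) p := fun m =>
    x + ((c : ℂ) ^ K m)⁻¹ • y + lp.single p 0 (β m) with hu_def
  have hsingle_norm : ∀ z : ℂ, ‖lp.single (E := fun _ : ℕ => ℂ) p (0:ℕ) z‖ = ‖z‖ := by
    intro z
    exact lp.norm_single (E := fun _ : ℕ => ℂ) (zero_lt_one.trans_le (Fact.out : (1:ℝ≥0∞) ≤ p)) 0 z
  have hsingle_tendsto : ∀ (γ : ℕ → ℂ), Tendsto γ atTop (𝓝 0) →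
      Tendsto (fun m => lp.single (E := fun _ : ℕ => ℂ) p (0:ℕ) (γ m)) atTop (𝓝 0) := by
    intro γ hγ
    rw [tendsto_zero_iff_norm_tendsto_zero]
    have : (fun m => ‖lp.single (E := fun _ : ℕ => ℂ) p (0:ℕ) (γ m)‖) = fun m => ‖γ m‖ := by
      funext m; exact hsingle_norm (γ m)
    rw [this, ← tendsto_zero_iff_norm_tendsto_zero]
    exact hγ
  refine ⟨u, k, l, ?_, ?_, ?_⟩
  · -- u m → x
    have h1 : Tendsto (fun m => ((c : ℂ) ^ K m)⁻¹ • y) atTop (𝓝 0) := by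
      simpa using hinv.smul_const y
    have h2 : Tendsto (fun m => lp.single (E := fun _ : ℕ => ℂ) p (0:ℕ) (β m))
        atTop (𝓝 0) := hsingle_tendsto β hβ
    have hcx : Tendsto (fun _ : ℕ => x) atTop (𝓝 x) := tendsto_const_nhds
    have := (hcx.add h1).add h2
    simpa using this
  · -- k m + l m → ∞
    apply tendsto_atTop_mono (fun m => le_trans (hk m) (Nat.le_add_right _ _))
      tendsto_id
  · -- (T₁^k T₂^l) (u m) → y
    have himg : ∀ m, (T₁ ^ k m * T₂ ^ l m) (u m)
        = y + lp.single p 0 (a ^ k m * b ^ l m * α m - (y : ∀ _ : ℕ, ℂ) 0) := by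
      intro m
      apply lp.ext
      funext i
      rw [pair_coord a b c T₁ T₂ hT₁ hT₂]
      have hcK : (c : ℂ) ^ K m ≠ 0 := pow_ne_zero _ hc0
      by_cases h : i = 0
      · subst h
        rw [if_pos rfl]
        simp only [hu_def, lp.coeFn_add, lp.coeFn_smul, Pi.add_apply,
          Pi.smul_apply, smul_eq_mul, lp.single_apply_self, hβ_def]
        ring
      · rw [if_neg h]
        have hs1 : (lp.single (E := fun _ : ℕ => ℂ) p (0:ℕ) (β m) : ∀ _ : ℕ, ℂ) i = 0 :=
          lp.single_apply_ne p 0 _ h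
        have hs2 : (lp.single (E := fun _ : ℕ => ℂ) p (0:ℕ)
            (a ^ k m * b ^ l m * α m - (y : ∀ _ : ℕ, ℂ) 0) : ∀ _ : ℕ, ℂ) i = 0 :=
          lp.single_apply_ne p 0 _ h
        simp only [hu_def, lp.coeFn_add, lp.coeFn_smul, Pi.add_apply, Pi.smul_apply,
          smul_eq_mul, hs1, hs2, hx i h, add_zero, zero_add, mul_zero, hK_def]
        rw [mul_inv_cancel_left₀ (pow_ne_zero _ hc0)]
    simp only [himg]
    have h4 : Tendsto
        (fun m => lp.single (E := fun _ : ℕ => ℂ) p (0:ℕ)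
          (a ^ k m * b ^ l m * α m - (y : ∀ _ : ℕ, ℂ) 0))
        atTop (𝓝 0) := by
      apply hsingle_tendsto
      simpa using hwα.sub_const ((y : ∀ _ : ℕ, ℂ) 0)
    have hcy : Tendsto (fun _ : ℕ => y) atTop (𝓝 y) := tendsto_const_nhds
    have := hcy.add h4
    simpa using this

end LpPairAux

open LpPairAux in
/-- Let `1 ≤ p < ∞`, let `a, b, c ∈ ℂ` with `{a^k b^l : k, l ∈ ℕ}` dense in `ℂ` and
`|c| > 1`, and let `T₁, T₂` be the diagonal operators on `ℓᵖ(ℕ)` given by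
`T₁(x₁,x₂,x₃,…) = (a x₁, c x₂, c x₃, …)` and `T₂(x₁,x₂,x₃,…) = (b x₁, c x₂, c x₃, …)`.
Then `{x : J_{(T₁,T₂)}(x) = ℓᵖ(ℕ)} = {(x₁,0,0,…)}`, so `(T₁,T₂)` is a locally hypercyclic
pair; moreover `(T₁,T₂)` is not hypercyclic. -/
theorem lp_diagonal_pair_locally_hypercyclic_not_hypercyclic
    (p : ℝ≥0∞) [Fact (1 ≤ p)] (hp : p ≠ ⊤) (a b c : ℂ)
    (hab : Dense {w : ℂ | ∃ k l : ℕ, 0 < k ∧ 0 < l ∧ a ^ k * b ^ l = w})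
    (hc : 1 < ‖c‖)
    (T₁ T₂ : lp (fun _ : ℕ => ℂ) p →L[ℂ] lp (fun _ : ℕ => ℂ) p)
    (hT₁ : ∀ (x : lp (fun _ : ℕ => ℂ) p) (i : ℕ),
      (T₁ x : ∀ _ : ℕ, ℂ) i = (if i = 0 then a else c) * (x : ∀ _ : ℕ, ℂ) i)
    (hT₂ : ∀ (x : lp (fun _ : ℕ => ℂ) p) (i : ℕ),
      (T₂ x : ∀ _ : ℕ, ℂ) i = (if i = 0 then b else c) * (x : ∀ _ : ℕ, ℂ) i) :
    ({x : lp (fun _ : ℕ => ℂ) p | JSetPairOp T₁ T₂ x = Set.univ}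
        = {x : lp (fun _ : ℕ => ℂ) p | ∀ i : ℕ, i ≠ 0 → (x : ∀ _ : ℕ, ℂ) i = 0}) ∧
    (∃ x : lp (fun _ : ℕ => ℂ) p, x ≠ 0 ∧ JSetPairOp T₁ T₂ x = Set.univ) ∧
    ¬ ∃ x : lp (fun _ : ℕ => ℂ) p,
        Dense {y : lp (fun _ : ℕ => ℂ) p | ∃ k l : ℕ, (T₁ ^ k * T₂ ^ l) x = y} := by
  have hcn : 1 < ‖c‖ := hc
  have hp0 : p ≠ 0 := by
    intro h
    have h1 : (1:ℝ≥0∞) ≤ p := Fact.out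
    rw [h] at h1; simp at h1
  obtain ⟨ha, hb⟩ := ne_zero_of_dense hab
  -- the main construction: J(x) = univ whenever the tail of x vanishes
  have main : ∀ x : lp (fun _ : ℕ => ℂ) p,
      (∀ i : ℕ, i ≠ 0 → (x : ∀ _ : ℕ, ℂ) i = 0) → JSetPairOp T₁ T₂ x = Set.univ := by
    intro x hx
    apply Set.eq_univ_of_forall
    intro y
    by_cases hx0 : (x : ∀ _ : ℕ, ℂ) 0 = 0
    · -- use large values of a^k b^l
      choose k l hk hl hw using fun m : ℕ =>
        exists_pow_close hab m ((m : ℂ) + 2) one_pos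
      set w : ℕ → ℂ := fun m => a ^ k m * b ^ l m with hw_def
      have hwne : ∀ m, w m ≠ 0 :=
        fun m => mul_ne_zero (pow_ne_zero _ ha) (pow_ne_zero _ hb)
      have hwbig : ∀ m : ℕ, (m + 1 : ℝ) ≤ ‖w m‖ := by
        intro m
        have h1 : ‖(m : ℂ) + 2‖ = (m : ℝ) + 2 := by
          rw [show ((m : ℂ) + 2) = ((m + 2 : ℕ) : ℂ) by push_cast; ring,
            Complex.norm_natCast]
          push_cast
          ring
        have h2 := norm_sub_norm_le ((m : ℂ) + 2) (w m)
        rw [norm_sub_rev] at h2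
        have h3 := (hw m).le
        rw [h1] at h2
        linarith
      refine mem_J hp a b c hc T₁ T₂ hT₁ hT₂ x y hx k l (fun m => (hk m).le)
        (fun m => (y : ∀ _ : ℕ, ℂ) 0 * (w m)⁻¹) ?_ ?_
      · rw [hx0, tendsto_zero_iff_norm_tendsto_zero]
        have hb1 : ∀ m : ℕ, ‖(y : ∀ _ : ℕ, ℂ) 0 * (w m)⁻¹‖
            ≤ ‖(y : ∀ _ : ℕ, ℂ) 0‖ * (1 / ((m : ℝ) + 1)) := by
          intro m
          rw [norm_mul, norm_inv]
          apply mul_le_mul_of_nonneg_left _ (norm_nonneg _)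
          rw [one_div]
          apply inv_anti₀ (by positivity) (hwbig m)
        have hgeo : Tendsto (fun m : ℕ => ‖(y : ∀ _ : ℕ, ℂ) 0‖ * (1 / ((m : ℝ) + 1)))
            atTop (𝓝 0) := by
          have := tendsto_one_div_add_atTop_nhds_zero_nat.const_mul
            ‖(y : ∀ _ : ℕ, ℂ) 0‖
          simpa using this
        exact squeeze_zero (fun m => norm_nonneg _) hb1 hgeo
      · have : (fun m => a ^ k m * b ^ l m * ((y : ∀ _ : ℕ, ℂ) 0 * (w m)⁻¹))
            = fun _ => (y : ∀ _ : ℕ, ℂ) 0 := by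
          funext m
          rw [hw_def]
          field_simp
        rw [this]
        exact tendsto_const_nhds
    · -- approximate y 0 / x 0
      choose k l hk hl hw using fun m : ℕ =>
        exists_pow_close hab m ((y : ∀ _ : ℕ, ℂ) 0 / (x : ∀ _ : ℕ, ℂ) 0)
          (ε := 1 / ((m : ℝ) + 1)) (by positivity)
      refine mem_J hp a b c hc T₁ T₂ hT₁ hT₂ x y hx k l (fun m => (hk m).le)
        (fun _ => (x : ∀ _ : ℕ, ℂ) 0) tendsto_const_nhds ?_
      have hwlim : Tendsto (fun m => a ^ k m * b ^ l m) atTop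
          (𝓝 ((y : ∀ _ : ℕ, ℂ) 0 / (x : ∀ _ : ℕ, ℂ) 0)) := by
        rw [tendsto_iff_norm_sub_tendsto_zero]
        apply squeeze_zero (fun m => norm_nonneg _) (fun m => (hw m).le)
        exact tendsto_one_div_add_atTop_nhds_zero_nat
      have := hwlim.mul_const ((x : ∀ _ : ℕ, ℂ) 0)
      rw [div_mul_cancel₀ _ hx0] at this
      exact this
  -- the reverse inclusion
  have conv : ∀ x : lp (fun _ : ℕ => ℂ) p, JSetPairOp T₁ T₂ x = Set.univ →
      ∀ i : ℕ, i ≠ 0 → (x : ∀ _ : ℕ, ℂ) i = 0 := by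
    intro x hJ i hi
    by_contra hxi
    have h0 : (0 : lp (fun _ : ℕ => ℂ) p) ∈ JSetPairOp T₁ T₂ x := by
      rw [hJ]; trivial
    obtain ⟨u, k, l, hu, hkl, hv⟩ := h0
    -- coordinate i of the image tends to 0
    have hvi : Tendsto (fun m => ((T₁ ^ k m * T₂ ^ l m) (u m) : ∀ _ : ℕ, ℂ) i)
        atTop (𝓝 0) := by
      have := coord_tendsto hp0 hv i
      simpa using this
    have hui : Tendsto (fun m => ((u m : ∀ _ : ℕ, ℂ)) i) atTop
        (𝓝 ((x : ∀ _ : ℕ, ℂ) i)) := coord_tendsto hp0 hu i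
    have hni : Tendsto (fun m => ‖((u m : ∀ _ : ℕ, ℂ)) i‖) atTop
        (𝓝 ‖(x : ∀ _ : ℕ, ℂ) i‖) := hui.norm
    have hni2 : Tendsto
        (fun m => ‖((T₁ ^ k m * T₂ ^ l m) (u m) : ∀ _ : ℕ, ℂ) i‖) atTop (𝓝 0) := by
      rw [← tendsto_zero_iff_norm_tendsto_zero]; exact hvi
    have hle : ‖(x : ∀ _ : ℕ, ℂ) i‖ ≤ 0 := by
      apply le_of_tendsto_of_tendsto' hni hni2
      intro m
      rw [pair_coord a b c T₁ T₂ hT₁ hT₂, if_neg hi, norm_mul, norm_pow]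
      have h1 : (1:ℝ) ≤ ‖c‖ ^ (k m + l m) := one_le_pow₀ hcn.le
      nlinarith [norm_nonneg ((u m : ∀ _ : ℕ, ℂ) i)]
    have : 0 < ‖(x : ∀ _ : ℕ, ℂ) i‖ := norm_pos_iff.mpr hxi
    linarith
  have hseteq : ({x : lp (fun _ : ℕ => ℂ) p | JSetPairOp T₁ T₂ x = Set.univ}
      = {x : lp (fun _ : ℕ => ℂ) p | ∀ i : ℕ, i ≠ 0 → (x : ∀ _ : ℕ, ℂ) i = 0}) := by
    ext x
    exact ⟨fun h => conv x h, fun h => main x h⟩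
  refine ⟨hseteq, ?_, ?_⟩
  · refine ⟨lp.single p 0 1, ?_, ?_⟩
    · intro h
      have : (lp.single p (0:ℕ) (1:ℂ) : ∀ _ : ℕ, ℂ) 0 = 0 := by
        rw [h, lp.coeFn_zero, Pi.zero_apply]
      rw [lp.single_apply_self] at this
      exact one_ne_zero this
    · apply main
      intro i hi
      exact lp.single_apply_ne p 0 _ hi
  · rintro ⟨x, hx⟩
    set t : ℂ := (x : ∀ _ : ℕ, ℂ) 1 with ht_def
    by_cases ht : t = 0
    · obtain ⟨v, ⟨k, l, rfl⟩, hv⟩ := hx.exists_dist_lt (lp.single p 1 1)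
        (ε := 1/2) (by norm_num)
      have h1 : ‖((T₁ ^ k * T₂ ^ l) x : ∀ _ : ℕ, ℂ) 1 - (lp.single p (1:ℕ) (1:ℂ) : ∀ _ : ℕ, ℂ) 1‖
          ≤ dist (lp.single p (1:ℕ) (1:ℂ)) ((T₁ ^ k * T₂ ^ l) x) := by
        rw [dist_comm, dist_eq_norm]
        have := lp.norm_apply_le_norm hp0 ((T₁ ^ k * T₂ ^ l) x - lp.single p 1 1) 1
        rwa [lp.coeFn_sub, Pi.sub_apply] at this
      rw [pair_coord a b c T₁ T₂ hT₁ hT₂, if_neg one_ne_zero, ← ht_def, ht, mul_zero,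
        lp.single_apply_self, zero_sub, norm_neg, norm_one] at h1
      linarith
    · obtain ⟨v, ⟨k, l, rfl⟩, hv⟩ := hx.exists_dist_lt 0 (ε := ‖t‖)
        (norm_pos_iff.mpr ht)
      have h1 : ‖((T₁ ^ k * T₂ ^ l) x : ∀ _ : ℕ, ℂ) 1‖ ≤ dist (0 : lp (fun _ : ℕ => ℂ) p)
          ((T₁ ^ k * T₂ ^ l) x) := by
        rw [dist_eq_norm, norm_sub_rev, sub_zero]
        exact lp.norm_apply_le_norm hp0 _ 1
      rw [pair_coord a b c T₁ T₂ hT₁ hT₂, if_neg one_ne_zero, ← ht_def, norm_mul,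
        norm_pow] at h1
      have h2 : (1:ℝ) ≤ ‖c‖ ^ (k + l) := one_le_pow₀ hcn.le
      nlinarith [norm_pos_iff.mpr ht]
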